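/- arXiv:1302.7316 — 5 statements merged into one kernel-verified Lean document; each statement's English description precedes it below -/
import Mathlib

section
/- Under the assumptions of the collision-counting setup, |M^{S₂}| = |M^{S₂'}| for any two s₂-subsets S₂, S₂' of P; hence the garbage state coefficients α_{S̃₁}(S₂, S₂') = sqrt(C(n₂−s₂, m) / (C(|P(S̃₁)|+m, m) · |M^{S₂}|)) are symmetric in S₂ and S₂', i.e., |ψ(S₂,S₂')⟩ = |ψ(S₂',S₂)⟩. -/
/-- Relabeling map on vertices induced by a map `f` on pairs: an endpoint of a pair
`p ∈ D` is sent to the corresponding endpoint of `f p`; all other vertices are fixed. -/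
noncomputable def collisionRelabel {V : Type*} [DecidableEq V]
    (D : Finset (V × V)) (f : V × V → V × V) : V → V := fun v =>
  if h1 : ∃ p ∈ D, p.1 = v then (f h1.choose).1
  else if h2 : ∃ p ∈ D, p.2 = v then (f h2.choose).2
  else v

lemma marked_count_le {V : Type*} [DecidableEq V]
    (A₁ A₂ : Finset V) (hA : Disjoint A₁ A₂)
    (P : Finset (V × V)) (hP1 : ∀ p ∈ P, p.1 ∈ A₁) (hP2 : ∀ p ∈ P, p.2 ∈ A₂)
    (hPdisj : ∀ p ∈ P, ∀ q ∈ P, p ≠ q →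
      Disjoint ({p.1, p.2} : Finset V) ({q.1, q.2} : Finset V))
    (s₁ m : ℕ) (S₂ S₂' : Finset (V × V)) (hS₂ : S₂ ⊆ P) (hS₂' : S₂' ⊆ P)
    (hcard : S₂.card = S₂'.card) :
    ((((A₁ ∪ A₂) \ S₂.biUnion (fun p => ({p.1, p.2} : Finset V))).powersetCard s₁).filter
      (fun S₁ => m ≤ (P.filter (fun p => p.1 ∈ S₁ ∧ p.2 ∈ S₁)).card)).card ≤
    ((((A₁ ∪ A₂) \ S₂'.biUnion (fun p => ({p.1, p.2} : Finset V))).powersetCard s₁).filter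
      (fun S₁ => m ≤ (P.filter (fun p => p.1 ∈ S₁ ∧ p.2 ∈ S₁)).card)).card := by
  classical
  set D : Finset (V × V) := P \ S₂ with hD
  set D' : Finset (V × V) := P \ S₂' with hD'
  have hDP : D ⊆ P := Finset.sdiff_subset
  have hD'P : D' ⊆ P := Finset.sdiff_subset
  have hDcard : D.card = D'.card := by
    rw [hD, hD', Finset.card_sdiff_of_subset hS₂, Finset.card_sdiff_of_subset hS₂', hcard]
  -- basic distinctness facts
  have h11 : ∀ p ∈ P, ∀ q ∈ P, p.1 = q.1 → p = q := by
    intro p hp q hq h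
    by_contra hne
    have hd := hPdisj p hp q hq hne
    have hx : p.1 ∈ ({p.1, p.2} : Finset V) := by simp
    have hy : p.1 ∈ ({q.1, q.2} : Finset V) := by simp [h]
    exact Finset.disjoint_left.mp hd hx hy
  have h22 : ∀ p ∈ P, ∀ q ∈ P, p.2 = q.2 → p = q := by
    intro p hp q hq h
    by_contra hne
    have hd := hPdisj p hp q hq hne
    have hx : p.2 ∈ ({p.1, p.2} : Finset V) := by simp
    have hy : p.2 ∈ ({q.1, q.2} : Finset V) := by simp [h]
    exact Finset.disjoint_left.mp hd hx hy
  have h12 : ∀ p ∈ P, ∀ q ∈ P, p.1 ≠ q.2 := by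
    intro p hp q hq h
    exact (Finset.disjoint_left.mp hA (hP1 p hp)) (h ▸ hP2 q hq)
  -- the equivalence between D and D'
  obtain ⟨e⟩ : Nonempty ((D : Finset (V × V)) ≃ (D' : Finset (V × V))) :=
    ⟨Finset.equivOfCardEq hDcard⟩
  set f : V × V → V × V := fun p => if hp : p ∈ D then (e ⟨p, hp⟩ : V × V) else p with hf
  set f' : V × V → V × V := fun q => if hq : q ∈ D' then (e.symm ⟨q, hq⟩ : V × V) else q with hf'
  have hfD : ∀ p ∈ D, f p ∈ D' := by
    intro p hp; simp only [hf, dif_pos hp]; exact (e ⟨p, hp⟩).2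
  have hf'D : ∀ q ∈ D', f' q ∈ D := by
    intro q hq; simp only [hf', dif_pos hq]; exact (e.symm ⟨q, hq⟩).2
  have hff' : ∀ p ∈ D, f' (f p) = p := by
    intro p hp
    simp only [hf, hf', dif_pos hp]
    rw [dif_pos (e ⟨p, hp⟩).2, Subtype.coe_eta, Equiv.symm_apply_apply]
  set g : V → V := collisionRelabel D f with hg
  set g' : V → V := collisionRelabel D' f' with hg'
  -- evaluation lemmas for g (and by symmetry g')
  have key : ∀ (E : Finset (V × V)) (F : V × V → V × V), E ⊆ P →
      (∀ p ∈ E, collisionRelabel E F p.1 = (F p).1 ∧ collisionRelabel E F p.2 = (F p).2) ∧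
      (∀ v, (∀ p ∈ E, p.1 ≠ v ∧ p.2 ≠ v) → collisionRelabel E F v = v) := by
    intro E F hEP
    constructor
    · intro p hp
      constructor
      · have h1 : ∃ q ∈ E, q.1 = p.1 := ⟨p, hp, rfl⟩
        rw [collisionRelabel, dif_pos h1]
        obtain ⟨hq, hq1⟩ := h1.choose_spec
        rw [h11 _ (hEP hq) _ (hEP hp) hq1]
      · have h1 : ¬ ∃ q ∈ E, q.1 = p.2 := by
          rintro ⟨q, hq, hq1⟩
          exact h12 q (hEP hq) p (hEP hp) hq1
        have h2 : ∃ q ∈ E, q.2 = p.2 := ⟨p, hp, rfl⟩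
        rw [collisionRelabel, dif_neg h1, dif_pos h2]
        obtain ⟨hq, hq2⟩ := h2.choose_spec
        rw [h22 _ (hEP hq) _ (hEP hp) hq2]
    · intro v hv
      rw [collisionRelabel, dif_neg, dif_neg]
      · rintro ⟨q, hq, hq2⟩; exact (hv q hq).2 hq2
      · rintro ⟨q, hq, hq1⟩; exact (hv q hq).1 hq1
  obtain ⟨hgD, hgfree⟩ := key D f hDP
  obtain ⟨hg'D, hg'free⟩ := key D' f' hD'P
  rw [← hg] at hgD hgfree
  rw [← hg'] at hg'D hg'free
  set G : Finset V := (A₁ ∪ A₂) \ S₂.biUnion (fun p => ({p.1, p.2} : Finset V)) with hG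
  set G' : Finset V := (A₁ ∪ A₂) \ S₂'.biUnion (fun p => ({p.1, p.2} : Finset V)) with hG'
  have hmemG : ∀ v, v ∈ G ↔ v ∈ A₁ ∪ A₂ ∧ ∀ p ∈ S₂, p.1 ≠ v ∧ p.2 ≠ v := by
    intro v
    rw [hG, Finset.mem_sdiff]
    simp only [Finset.mem_biUnion, Finset.mem_insert, Finset.mem_singleton]
    push_neg
    constructor
    · rintro ⟨h1, h2⟩
      exact ⟨h1, fun p hp => ⟨fun h => (h2 p hp).1 h.symm, fun h => (h2 p hp).2 h.symm⟩⟩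
    · rintro ⟨h1, h2⟩
      exact ⟨h1, fun p hp => ⟨fun h => (h2 p hp).1 h.symm, fun h => (h2 p hp).2 h.symm⟩⟩
  have hmemG' : ∀ v, v ∈ G' ↔ v ∈ A₁ ∪ A₂ ∧ ∀ p ∈ S₂', p.1 ≠ v ∧ p.2 ≠ v := by
    intro v
    rw [hG', Finset.mem_sdiff]
    simp only [Finset.mem_biUnion, Finset.mem_insert, Finset.mem_singleton]
    push_neg
    constructor
    · rintro ⟨h1, h2⟩
      exact ⟨h1, fun p hp => ⟨fun h => (h2 p hp).1 h.symm, fun h => (h2 p hp).2 h.symm⟩⟩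
    · rintro ⟨h1, h2⟩
      exact ⟨h1, fun p hp => ⟨fun h => (h2 p hp).1 h.symm, fun h => (h2 p hp).2 h.symm⟩⟩
  -- the main claim: g' ∘ g = id on G, and g maps G into G'
  have main : ∀ v ∈ G, g' (g v) = v ∧ g v ∈ G' := by
    intro v hv
    obtain ⟨hvU, hvS₂⟩ := (hmemG v).mp hv
    by_cases h1 : ∃ p ∈ D, p.1 = v
    · obtain ⟨p, hp, hp1⟩ := h1
      subst hp1
      have hfp : f p ∈ D' := hfD p hp
      have hgv : g p.1 = (f p).1 := (hgD p hp).1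
      constructor
      · rw [hgv, (hg'D (f p) hfp).1, hff' p hp]
      · rw [hgv, hmemG' (f p).1]
        refine ⟨Finset.mem_union_left _ (hP1 (f p) (hD'P hfp)), ?_⟩
        intro q hq
        constructor
        · intro h
          have : q = f p := h11 q (hS₂' hq) (f p) (hD'P hfp) h
          rw [hD'] at hfp
          exact (Finset.mem_sdiff.mp hfp).2 (this ▸ hq)
        · intro h
          exact h12 (f p) (hD'P hfp) q (hS₂' hq) h.symm
    · by_cases h2 : ∃ p ∈ D, p.2 = v
      · obtain ⟨p, hp, hp2⟩ := h2
        subst hp2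
        have hfp : f p ∈ D' := hfD p hp
        have hgv : g p.2 = (f p).2 := (hgD p hp).2
        constructor
        · rw [hgv, (hg'D (f p) hfp).2, hff' p hp]
        · rw [hgv, hmemG' (f p).2]
          refine ⟨Finset.mem_union_right _ (hP2 (f p) (hD'P hfp)), ?_⟩
          intro q hq
          constructor
          · intro h
            exact h12 q (hS₂' hq) (f p) (hD'P hfp) h
          · intro h
            have : q = f p := h22 q (hS₂' hq) (f p) (hD'P hfp) h
            rw [hD'] at hfp
            exact (Finset.mem_sdiff.mp hfp).2 (this ▸ hq)
      · -- v is not an endpoint of any pair in D; since v ∈ G it is also not an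
        -- endpoint of any pair of S₂, hence of any pair of P at all that matters
        have hvP : ∀ p ∈ D, p.1 ≠ v ∧ p.2 ≠ v := by
          intro p hp
          exact ⟨fun h => h1 ⟨p, hp, h⟩, fun h => h2 ⟨p, hp, h⟩⟩
        have hvD' : ∀ p ∈ D', p.1 ≠ v ∧ p.2 ≠ v := by
          intro p hp
          have hpP : p ∈ P := hD'P hp
          by_cases hpS₂ : p ∈ S₂
          · exact hvS₂ p hpS₂
          · exact hvP p (Finset.mem_sdiff.mpr ⟨hpP, hpS₂⟩)
        have hgv : g v = v := hgfree v hvP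
        constructor
        · rw [hgv]; exact hg'free v hvD'
        · rw [hgv, hmemG' v]
          refine ⟨hvU, ?_⟩
          intro q hq
          have hqP : q ∈ P := hS₂' hq
          by_cases hqS₂ : q ∈ S₂
          · exact hvS₂ q hqS₂
          · exact hvP q (Finset.mem_sdiff.mpr ⟨hqP, hqS₂⟩)
  have hinjG : Set.InjOn g G := by
    intro x hx y hy hxy
    have := (main x hx).1
    rw [hxy, (main y hy).1] at this
    exact this.symm
  -- now the cardinality bound
  apply Finset.card_le_card_of_injOn (fun S₁ => S₁.image g)
  · intro S₁ hS₁
    dsimp only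
    simp only [Finset.mem_coe, Finset.mem_filter, Finset.mem_powersetCard] at hS₁ ⊢
    obtain ⟨⟨hsub, hcard₁⟩, hm₁⟩ := hS₁
    have hsubG' : S₁.image g ⊆ G' := by
      intro v hv
      obtain ⟨u, hu, rfl⟩ := Finset.mem_image.mp hv
      exact (main u (hsub hu)).2
    refine ⟨⟨hsubG', ?_⟩, ?_⟩
    · rw [Finset.card_image_of_injOn (hinjG.mono (by exact_mod_cast hsub)), hcard₁]
    · refine le_trans hm₁ (Finset.card_le_card_of_injOn f ?_ ?_)
      · intro p hp
        simp only [Finset.mem_coe, Finset.mem_filter] at hp ⊢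
        obtain ⟨hpP, hp1, hp2⟩ := hp
        have hpD : p ∈ D := by
          rw [hD, Finset.mem_sdiff]
          refine ⟨hpP, fun hpS₂ => ?_⟩
          have := ((hmemG p.1).mp (hsub hp1)).2 p hpS₂
          exact this.1 rfl
        refine ⟨hD'P (hfD p hpD), ?_, ?_⟩
        · rw [← (hgD p hpD).1]; exact Finset.mem_image_of_mem g hp1
        · rw [← (hgD p hpD).2]; exact Finset.mem_image_of_mem g hp2
      · intro p hp q hq hpq
        rw [Finset.mem_coe, Finset.mem_filter] at hp hq
        have hpD : p ∈ D := by
          rw [hD, Finset.mem_sdiff]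
          refine ⟨hp.1, fun hpS₂ => ?_⟩
          exact ((hmemG p.1).mp (hsub hp.2.1)).2 p hpS₂ |>.1 rfl
        have hqD : q ∈ D := by
          rw [hD, Finset.mem_sdiff]
          refine ⟨hq.1, fun hqS₂ => ?_⟩
          exact ((hmemG q.1).mp (hsub hq.2.1)).2 q hqS₂ |>.1 rfl
        have := hff' p hpD
        rw [hpq, hff' q hqD] at this
        exact this.symm
  · intro S₁ hS₁ T₁ hT₁ himg
    have himg' : Finset.image g S₁ = Finset.image g T₁ := himg
    rw [Finset.mem_coe, Finset.mem_filter, Finset.mem_powersetCard] at hS₁ hT₁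
    have hre : ∀ (U : Finset V), U ⊆ G → (U.image g).image g' = U := by
      intro U hU
      ext v
      simp only [Finset.mem_image]
      constructor
      · rintro ⟨w, ⟨u, hu, rfl⟩, rfl⟩
        rw [(main u (hU hu)).1]; exact hu
      · intro hv
        exact ⟨g v, ⟨v, hv, rfl⟩, (main v (hU hv)).1⟩
    have := hre S₁ hS₁.1.1
    rw [himg', hre T₁ hT₁.1.1] at this
    exact this.symm

/-- Under the collision-counting setup, `|M^{S₂}| = |M^{S₂'}|` for any two `s₂`-subsets
`S₂, S₂'` of `P`; hence the garbage state coefficients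
`α_{T₁}(S₂,S₂') = sqrt(C(n₂-s₂,m) / (C(|P(T₁)|+m,m) * |M^{S₂}|))`
are symmetric in `S₂` and `S₂'`, so `|ψ(S₂,S₂')⟩ = |ψ(S₂',S₂)⟩`. -/
theorem marked_count_symmetric {V : Type*} [DecidableEq V]
    (A₁ A₂ : Finset V) (hA : Disjoint A₁ A₂) (χ : V → ℕ)
    (P : Finset (V × V)) (n₂ s₁ s₂ m : ℕ)
    (hP : ∀ p ∈ P, p.1 ∈ A₁ ∧ p.2 ∈ A₂ ∧ χ p.1 = χ p.2)
    (hPdisj : ∀ p ∈ P, ∀ q ∈ P, p ≠ q →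
      Disjoint ({p.1, p.2} : Finset V) ({q.1, q.2} : Finset V))
    (hPall : ∀ i ∈ A₁ ∪ A₂, ∀ j ∈ A₁ ∪ A₂, i ≠ j → χ i = χ j →
      (i, j) ∈ P ∨ (j, i) ∈ P)
    (hn₂ : P.card = n₂) (hm : 2 * m ≤ s₁) (hs₂ : s₂ + m ≤ n₂)
    (S₂ S₂' : Finset (V × V)) (hS₂ : S₂ ⊆ P) (hS₂card : S₂.card = s₂)
    (hS₂' : S₂' ⊆ P) (hS₂'card : S₂'.card = s₂)
    -- `M^{T}` : marked sets of the inner walk for outer vertex `T`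
    (M : Finset (V × V) → Finset (Finset V))
    (hM : ∀ T : Finset (V × V), M T =
      (((A₁ ∪ A₂) \ T.biUnion (fun p => ({p.1, p.2} : Finset V))).powersetCard s₁).filter
        (fun S₁ => m ≤ (P.filter (fun p => p.1 ∈ S₁ ∧ p.2 ∈ S₁)).card)) :
    (M S₂).card = (M S₂').card ∧
    ∀ T₁ : Finset V,
      Real.sqrt (((n₂ - s₂).choose m : ℝ) /
        ((((P.filter (fun p => p.1 ∈ T₁ ∧ p.2 ∈ T₁)).card + m).choose m : ℝ) * (M S₂).card))
      = Real.sqrt (((n₂ - s₂).choose m : ℝ) /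
        ((((P.filter (fun p => p.1 ∈ T₁ ∧ p.2 ∈ T₁)).card + m).choose m : ℝ) * (M S₂').card)) := by
  have hP1 : ∀ p ∈ P, p.1 ∈ A₁ := fun p hp => (hP p hp).1
  have hP2 : ∀ p ∈ P, p.2 ∈ A₂ := fun p hp => (hP p hp).2.1
  have hcards : (M S₂).card = (M S₂').card := by
    rw [hM S₂, hM S₂']
    exact le_antisymm
      (marked_count_le A₁ A₂ hA P hP1 hP2 hPdisj s₁ m S₂ S₂' hS₂ hS₂'
        (hS₂card.trans hS₂'card.symm))
      (marked_count_le A₁ A₂ hA P hP1 hP2 hPdisj s₁ m S₂' S₂ hS₂' hS₂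
        (hS₂'card.trans hS₂card.symm))
  exact ⟨hcards, fun T₁ => by rw [hcards]⟩
end

section
/- With notation as in the update walk: walking on J(2n/3 − 2s₂, s₁) and calling a vertex S₁ marked if it contains at least m = s₁²n₂/n² collision pairs, where the total number of disjoint collision pairs available is n₂ − s₂ = Ω(n) and s₁² ≥ Cn for a sufficiently large constant C, the fraction of marked vertices satisfies ε' = Ω(1). -/
open Finset



lemma card_supersets {α : Type} [Fintype α] [DecidableEq α] (T : Finset α) (k t : ℕ)
    (ht : T.card = t) (h : t ≤ k) :
    ((Finset.univ.powersetCard k).filter (fun S => T ⊆ S)).card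
      = (Fintype.card α - t).choose (k - t) := by
  subst ht
  rw [← Finset.card_compl T, ← Finset.card_powersetCard (k - T.card) Tᶜ]
  apply Finset.card_bij (fun S _ => S \ T)
  · intro S hS
    simp only [mem_filter, mem_powersetCard] at hS
    rw [mem_powersetCard]
    refine ⟨fun x hx => ?_, ?_⟩
    · simp only [mem_sdiff] at hx; simp [hx.2]
    · rw [card_sdiff_of_subset hS.2, hS.1.2]
  · intro S₁ h₁ S₂ h₂ he
    simp only [mem_filter, mem_powersetCard] at h₁ h₂
    rw [← sdiff_union_of_subset h₁.2, ← sdiff_union_of_subset h₂.2, he]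
  · intro U hU
    rw [mem_powersetCard] at hU
    have hd : Disjoint U T := by
      exact Finset.disjoint_left.2 fun x hx hxT => (Finset.mem_compl.1 (hU.1 hx)) hxT
    refine ⟨U ∪ T, ?_, ?_⟩
    · simp only [mem_filter, mem_powersetCard]
      exact ⟨⟨subset_univ _, by rw [card_union_of_disjoint hd, hU.2, Nat.sub_add_cancel h]⟩,
        subset_union_right⟩
    · exact union_sdiff_cancel_right hd


lemma sum_pairs {α : Type} [Fintype α] [DecidableEq α] (pairs : Finset (α × α)) (s₁ : ℕ)
    (hs : 2 ≤ s₁) (hne : ∀ p ∈ pairs, p.1 ≠ p.2)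
    (csup : ∀ (T : Finset α) (t : ℕ), T.card = t → t ≤ s₁ →
      ((Finset.univ.powersetCard s₁).filter (fun S => T ⊆ S)).card
        = (Fintype.card α - t).choose (s₁ - t)) :
    ∑ S ∈ Finset.univ.powersetCard s₁,
        (pairs.filter (fun p => p.1 ∈ S ∧ p.2 ∈ S)).card
      = pairs.card * (Fintype.card α - 2).choose (s₁ - 2) := by
  simp_rw [Finset.card_filter]
  rw [Finset.sum_comm]
  rw [Finset.sum_congr rfl (fun p hp => ?_), Finset.sum_const, smul_eq_mul]
  rw [← Finset.card_filter]
  have he : ((Finset.univ.powersetCard s₁).filter (fun S => p.1 ∈ S ∧ p.2 ∈ S))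
      = (Finset.univ.powersetCard s₁).filter (fun S => ({p.1, p.2} : Finset α) ⊆ S) := by
    apply Finset.filter_congr
    intro S _
    simp [Finset.insert_subset_iff]
  rw [he, csup _ 2 (by rw [card_insert_of_notMem (by simp [hne p hp]), card_singleton]) hs]


lemma sum_pairs_sq {α : Type} [Fintype α] [DecidableEq α] (pairs : Finset (α × α)) (s₁ : ℕ)
    (hs : 4 ≤ s₁) (hne : ∀ p ∈ pairs, p.1 ≠ p.2)
    (hdisj : ∀ p ∈ pairs, ∀ q ∈ pairs, p ≠ q →
      Disjoint ({p.1, p.2} : Finset α) ({q.1, q.2} : Finset α))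
    (csup : ∀ (T : Finset α) (t : ℕ), T.card = t → t ≤ s₁ →
      ((Finset.univ.powersetCard s₁).filter (fun S => T ⊆ S)).card
        = (Fintype.card α - t).choose (s₁ - t)) :
    ∑ S ∈ Finset.univ.powersetCard s₁,
        ((pairs.filter (fun p => p.1 ∈ S ∧ p.2 ∈ S)).card) ^ 2
      = pairs.card * (Fintype.card α - 2).choose (s₁ - 2)
        + (pairs.card ^ 2 - pairs.card) * (Fintype.card α - 4).choose (s₁ - 4) := by
  have hsq : ∀ S : Finset α, ((pairs.filter (fun p => p.1 ∈ S ∧ p.2 ∈ S)).card) ^ 2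
      = (((pairs ×ˢ pairs)).filter
          (fun pq => (pq.1.1 ∈ S ∧ pq.1.2 ∈ S) ∧ (pq.2.1 ∈ S ∧ pq.2.2 ∈ S))).card := by
    intro S
    rw [sq, ← Finset.card_product, ← Finset.filter_product]
  simp_rw [hsq, Finset.card_filter]
  rw [Finset.sum_comm]
  have key : ∀ pq ∈ pairs ×ˢ pairs,
      (∑ S ∈ Finset.univ.powersetCard s₁,
        if (pq.1.1 ∈ S ∧ pq.1.2 ∈ S) ∧ (pq.2.1 ∈ S ∧ pq.2.2 ∈ S) then 1 else 0)
      = if pq.1 = pq.2 then (Fintype.card α - 2).choose (s₁ - 2)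
        else (Fintype.card α - 4).choose (s₁ - 4) := by
    intro pq hpq
    rw [Finset.mem_product] at hpq
    rw [← Finset.card_filter]
    by_cases hd : pq.1 = pq.2
    · rw [if_pos hd]
      have he : ((Finset.univ.powersetCard s₁).filter
          (fun S => (pq.1.1 ∈ S ∧ pq.1.2 ∈ S) ∧ (pq.2.1 ∈ S ∧ pq.2.2 ∈ S)))
          = (Finset.univ.powersetCard s₁).filter
            (fun S => ({pq.1.1, pq.1.2} : Finset α) ⊆ S) := by
        apply Finset.filter_congr
        intro S _
        simp [Finset.insert_subset_iff, ← hd, and_assoc]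
      rw [he, csup _ 2 (by rw [card_insert_of_notMem (by simp [hne _ hpq.1]), card_singleton])
        (by omega)]
    · rw [if_neg hd]
      have hdj := hdisj _ hpq.1 _ hpq.2 hd
      have he : ((Finset.univ.powersetCard s₁).filter
          (fun S => (pq.1.1 ∈ S ∧ pq.1.2 ∈ S) ∧ (pq.2.1 ∈ S ∧ pq.2.2 ∈ S)))
          = (Finset.univ.powersetCard s₁).filter
            (fun S => (({pq.1.1, pq.1.2} : Finset α) ∪ {pq.2.1, pq.2.2}) ⊆ S) := by
        apply Finset.filter_congr
        intro S _
        simp only [Finset.union_subset_iff, Finset.insert_subset_iff,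
          Finset.singleton_subset_iff]
        try tauto
      have hc : (({pq.1.1, pq.1.2} : Finset α) ∪ {pq.2.1, pq.2.2}).card = 4 := by
        rw [card_union_of_disjoint hdj,
          card_insert_of_notMem (by simp [hne _ hpq.1]), card_singleton,
          card_insert_of_notMem (by simp [hne _ hpq.2]), card_singleton]
      rw [he, csup _ 4 hc hs]
  rw [Finset.sum_congr rfl key, Finset.sum_ite, Finset.sum_const, Finset.sum_const,
    smul_eq_mul, smul_eq_mul]
  have hdiag : ((pairs ×ˢ pairs).filter (fun pq => pq.1 = pq.2)).card = pairs.card := by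
    rw [show ((pairs ×ˢ pairs).filter (fun pq => pq.1 = pq.2))
        = pairs.image (fun p => (p, p)) from ?_]
    · exact Finset.card_image_of_injective _ (fun x y h => (Prod.mk.injEq _ _ _ _ ▸ h).1)
    · ext ⟨p, q⟩
      simp only [Finset.mem_filter, Finset.mem_product, Finset.mem_image, Prod.mk.injEq]
      constructor
      · rintro ⟨⟨h1, _⟩, h3⟩; exact ⟨p, h1, rfl, h3⟩
      · rintro ⟨r, hr, rfl, rfl⟩; exact ⟨⟨hr, hr⟩, rfl⟩
  have hoff : ((pairs ×ˢ pairs).filter (fun pq => ¬ pq.1 = pq.2)).card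
      = pairs.card ^ 2 - pairs.card := by
    have := Finset.card_filter_add_card_filter_not
      (s := pairs ×ˢ pairs) (p := fun pq => pq.1 = pq.2)
    rw [Finset.card_product, ← sq] at this
    omega
  rw [hdiag, hoff]


set_option maxHeartbeats 4000000 in
/-- The fraction of marked vertices of the update walk is constant: on a ground set of
size `N = 2n/3 - 2s₂` containing `n₂ - s₂ = Ω(n)` pairwise disjoint collision pairs
(`n₂ ≤ n`), a uniformly random `s₁`-subset `S₁` (with `s₁ ≤ N/2`, `s₂ ≤ n₂/2`, and
`s₁² ≥ Cn` for a sufficiently large constant `C`) contains at least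
`m = ⌊s₁²·n₂/n²⌋` collision pairs with probability `ε' = Ω(1)`. -/
theorem update_walk_marked_fraction :
    ∀ c : ℝ, 0 < c → ∃ C c' : ℝ, 0 < C ∧ 0 < c' ∧
      ∀ (α : Type) (_ : Fintype α) (_ : DecidableEq α)
        (n N n₂ s₁ s₂ m : ℕ) (pairs : Finset (α × α)),
        0 < n → Fintype.card α = N → N = 2 * n / 3 - 2 * s₂ →
        (∀ p ∈ pairs, p.1 ≠ p.2) →
        (∀ p ∈ pairs, ∀ q ∈ pairs, p ≠ q →
          Disjoint ({p.1, p.2} : Finset α) ({q.1, q.2} : Finset α)) →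
        pairs.card = n₂ - s₂ →
        c * n ≤ ((n₂ - s₂ : ℕ) : ℝ) →
        n₂ ≤ n → 2 * s₂ ≤ n₂ → 2 * s₁ ≤ N →
        C * n ≤ (s₁ : ℝ) ^ 2 →
        m = s₁ ^ 2 * n₂ / n ^ 2 →
        c' ≤ (((Finset.univ.powersetCard s₁).filter
                (fun S : Finset α =>
                  m ≤ (pairs.filter (fun p => p.1 ∈ S ∧ p.2 ∈ S)).card)).card : ℝ)
              / (N.choose s₁ : ℝ) := by
  intro c hc
  refine ⟨max 225 (8 / (9 * c)), 1 / 2048, lt_of_lt_of_le (by norm_num) (le_max_left _ _),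
    by norm_num, ?_⟩
  intro α _ _ n N n₂ s₁ s₂ m pairs hn hcard hNval hne hdisj hKcard hcn hn₂n hs₂ hs₁N hC hm
  -- basic size facts
  have hn1 : (1 : ℝ) ≤ n := by exact_mod_cast hn
  have h225 : (225 : ℝ) ≤ (s₁ : ℝ) ^ 2 := by
    have h1 : (225 : ℝ) * n ≤ max 225 (8 / (9 * c)) * n :=
      mul_le_mul_of_nonneg_right (le_max_left _ _) (by positivity)
    nlinarith
  have hs15 : 15 ≤ s₁ := by
    by_contra h
    push_neg at h
    have : (s₁ : ℝ) ≤ 14 := by exact_mod_cast Nat.lt_succ_iff.mp h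
    nlinarith [Nat.cast_nonneg (α := ℝ) s₁]
  have hs4 : 4 ≤ s₁ := by omega
  have hs₁Nle : s₁ + 4 ≤ N := by omega
  -- a, b normalization
  obtain ⟨a, ha⟩ : ∃ a, s₁ = a + 4 := ⟨s₁ - 4, by omega⟩
  obtain ⟨b, hb⟩ : ∃ b, N = b + 4 := ⟨N - 4, by omega⟩
  have hab : a ≤ b := by omega
  have ha11 : 11 ≤ a := by omega
  have e2 : N - 2 = b + 2 := by omega
  have e4 : N - 4 = b := by omega
  have f2 : s₁ - 2 = a + 2 := by omega
  have f4 : s₁ - 4 = a := by omega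
  -- counting lemma specialized
  have csup : ∀ (T : Finset α) (t : ℕ), T.card = t → t ≤ s₁ →
      ((Finset.univ.powersetCard s₁).filter (fun S => T ⊆ S)).card
        = (Fintype.card α - t).choose (s₁ - t) :=
    fun T t ht h => card_supersets T s₁ t ht h
  -- moment identities
  have h1 := sum_pairs pairs s₁ (by omega) hne csup
  have h2 := sum_pairs_sq pairs s₁ hs4 hne hdisj csup
  rw [hcard, hKcard, e2, f2] at h1
  rw [hcard, hKcard, e2, f2, e4, f4] at h2
  set K := n₂ - s₂ with hKdef
  -- Markov split
  set Ω : Finset (Finset α) := Finset.univ.powersetCard s₁ with hΩ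
  set Amark : Finset (Finset α) :=
    Ω.filter (fun S : Finset α =>
      m ≤ (pairs.filter (fun p => p.1 ∈ S ∧ p.2 ∈ S)).card) with hA
  have hΩcard : Ω.card = N.choose s₁ := by
    rw [hΩ, card_powersetCard, card_univ, hcard]
  have hsplit : ∑ S ∈ Ω, (pairs.filter (fun p => p.1 ∈ S ∧ p.2 ∈ S)).card
      ≤ (∑ S ∈ Amark, (pairs.filter (fun p => p.1 ∈ S ∧ p.2 ∈ S)).card)
        + N.choose s₁ * m := by
    rw [← Finset.sum_filter_add_sum_filter_not Ω
      (fun S : Finset α => m ≤ (pairs.filter (fun p => p.1 ∈ S ∧ p.2 ∈ S)).card)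
      (fun S : Finset α => (pairs.filter (fun p => p.1 ∈ S ∧ p.2 ∈ S)).card), ← hA]
    have hrest : ∑ S ∈ Ω.filter (fun S : Finset α =>
          ¬ m ≤ (pairs.filter (fun p => p.1 ∈ S ∧ p.2 ∈ S)).card),
          (pairs.filter (fun p => p.1 ∈ S ∧ p.2 ∈ S)).card ≤ N.choose s₁ * m := by
      calc ∑ S ∈ Ω.filter (fun S : Finset α =>
            ¬ m ≤ (pairs.filter (fun p => p.1 ∈ S ∧ p.2 ∈ S)).card),
            (pairs.filter (fun p => p.1 ∈ S ∧ p.2 ∈ S)).card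
          ≤ ∑ _S ∈ Ω.filter (fun S : Finset α =>
              ¬ m ≤ (pairs.filter (fun p => p.1 ∈ S ∧ p.2 ∈ S)).card), m := by
            apply Finset.sum_le_sum
            intro i hi
            exact le_of_lt (not_le.mp (Finset.mem_filter.mp hi).2)
        _ = (Ω.filter (fun S : Finset α =>
              ¬ m ≤ (pairs.filter (fun p => p.1 ∈ S ∧ p.2 ∈ S)).card)).card * m := by
            rw [Finset.sum_const, smul_eq_mul]
        _ ≤ N.choose s₁ * m := by
            apply Nat.mul_le_mul_right
            rw [← hΩcard]; exact Finset.card_filter_le _ _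
    omega
  -- choose identities, real versions
  set X0 : ℝ := ((b+4).choose (a+4) : ℝ) with hX0
  set X2 : ℝ := ((b+2).choose (a+2) : ℝ) with hX2
  set X4 : ℝ := (b.choose a : ℝ) with hX4
  set A' : ℝ := (a : ℝ) with hA'
  set B' : ℝ := (b : ℝ) with hB'
  have hchoose_eq : N.choose s₁ = (b+4).choose (a+4) := by rw [ha, hb]
  have hX0pos : (0:ℝ) < X0 := by
    rw [hX0]; exact_mod_cast Nat.choose_pos (by omega)
  have hX2pos : (0:ℝ) < X2 := by
    rw [hX2]; exact_mod_cast Nat.choose_pos (by omega)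
  have hX4nn : (0:ℝ) ≤ X4 := by rw [hX4]; positivity
  have u1 := Nat.add_one_mul_choose_eq (b+3) (a+3)
  have u2 := Nat.add_one_mul_choose_eq (b+2) (a+2)
  have u3 := Nat.add_one_mul_choose_eq (b+1) (a+1)
  have u4 := Nat.add_one_mul_choose_eq b a
  have ru1 : ((B'+4) * ((b+3).choose (a+3) : ℝ)) = X0 * (A'+4) := by
    rw [hX0, hA', hB']; exact_mod_cast u1
  have ru2 : ((B'+3) * X2) = ((b+3).choose (a+3) : ℝ) * (A'+3) := by
    rw [hX2, hA', hB']; exact_mod_cast u2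
  have ru3 : ((B'+2) * ((b+1).choose (a+1) : ℝ)) = X2 * (A'+2) := by
    rw [hX2, hA', hB']; exact_mod_cast u3
  have ru4 : ((B'+1) * X4) = ((b+1).choose (a+1) : ℝ) * (A'+1) := by
    rw [hX4, hA', hB']; exact_mod_cast u4
  have rid1 : X0 * ((A'+4)*(A'+3)) = ((B'+4)*(B'+3)) * X2 := by
    linear_combination (-(A'+3)) * ru1 + (-(B'+4)) * ru2
  have rid2 : X2 * ((A'+2)*(A'+1)) = ((B'+2)*(B'+1)) * X4 := by
    linear_combination (-(A'+1)) * ru3 + (-(B'+2)) * ru4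
  -- size bounds in ℝ
  have hNb : ((b:ℝ)+4) ≤ 2 * n / 3 := by
    have h1 : N ≤ 2 * n / 3 := by omega
    have h2 : ((N:ℕ):ℝ) ≤ ((2 * n / 3 : ℕ) : ℝ) := by exact_mod_cast h1
    have h3 : ((2 * n / 3 : ℕ) : ℝ) ≤ (2 * n : ℕ) / 3 := Nat.cast_div_le
    rw [hb] at h2
    push_cast at h2 h3 ⊢
    linarith
  have hk0 : (0:ℝ) < (K : ℝ) := lt_of_lt_of_le (by positivity) hcn
  have hK1 : 1 ≤ K := by exact_mod_cast Nat.one_le_iff_ne_zero.mpr (by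
    intro h; rw [h] at hk0; simp at hk0)
  have hn₂2K : ((n₂:ℕ):ℝ) ≤ 2 * K := by
    have : n₂ ≤ 2 * K := by omega
    exact_mod_cast this
  have hcs : (8:ℝ)/9 * n ≤ c * (s₁:ℝ)^2 := by
    have h1 : (8 / (9*c)) * n ≤ max 225 (8 / (9 * c)) * n :=
      mul_le_mul_of_nonneg_right (le_max_right _ _) (by positivity)
    have h2 : (8 / (9*c)) * n ≤ (s₁:ℝ)^2 := le_trans h1 hC
    rw [div_mul_eq_mul_div, div_le_iff₀ (by positivity)] at h2
    linarith only [h2]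
  have hsA : (s₁ : ℝ) = A' + 4 := by rw [hA', ha]; push_cast; ring
  -- Step B : X0 ≤ K * X2
  have hBB : ((B'+4)*(B'+3) : ℝ) ≤ (4/9) * n^2 := by
    have h1 : (0:ℝ) ≤ B' + 3 := by rw [hB']; positivity
    have h2 : (B' + 3 : ℝ) ≤ 2 * n / 3 := by linarith only [hNb]
    refine le_trans (mul_le_mul hNb h2 h1 (by positivity)) (le_of_eq (by ring))
  have hkAA : (4/9) * (n:ℝ)^2 ≤ (K:ℝ) * ((A'+4)*(A'+3)) := by
    have hA0 : (0:ℝ) ≤ A' := by rw [hA']; positivity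
    have h1 : (8:ℝ)/9 * n ≤ c * (A'+4)^2 := by rw [← hsA]; exact hcs
    nlinarith only [mul_le_mul_of_nonneg_right hcn
        (le_of_lt (by positivity : (0:ℝ) < (A'+4)*(A'+3))),
      mul_le_mul_of_nonneg_right h1 (le_of_lt (lt_of_lt_of_le one_pos hn1)),
      hA0, hn1, hc, hk0, sq_nonneg (A'+4), hcn]
  have hAA4pos : (0:ℝ) < (A'+4)*(A'+3) := by rw [hA']; positivity
  have stepB : X0 ≤ (K:ℝ) * X2 := by
    have key : X0 * ((A'+4)*(A'+3)) ≤ ((K:ℝ) * X2) * ((A'+4)*(A'+3)) := by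
      rw [rid1]
      calc ((B'+4)*(B'+3)) * X2 ≤ ((4/9) * n^2) * X2 :=
            mul_le_mul_of_nonneg_right hBB (le_of_lt hX2pos)
        _ ≤ ((K:ℝ) * ((A'+4)*(A'+3))) * X2 :=
            mul_le_mul_of_nonneg_right hkAA (le_of_lt hX2pos)
        _ = ((K:ℝ) * X2) * ((A'+4)*(A'+3)) := by ring
    exact le_of_mul_le_mul_right key hAA4pos
  -- Step A : m * X0 ≤ (31/32) * (K * X2)
  have hmn : (m:ℝ) * (n:ℝ)^2 ≤ 2 * K * (A'+4)^2 := by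
    have h1 : m * n^2 ≤ s₁^2 * n₂ := by rw [hm]; exact Nat.div_mul_le_self _ _
    have h2 : ((m:ℕ):ℝ) * (n:ℝ)^2 ≤ (s₁:ℝ)^2 * n₂ := by exact_mod_cast h1
    rw [hsA] at h2
    nlinarith only [h2, sq_nonneg (A'+4), hn₂2K]
  have stepA : (m:ℝ) * X0 ≤ (31/32) * ((K:ℝ) * X2) := by
    have hn2pos : (0:ℝ) < (n:ℝ)^2 := by positivity
    have key : ((m:ℝ) * X0) * ((A'+4)*(A'+3) * n^2)
        ≤ ((31/32) * ((K:ℝ) * X2)) * ((A'+4)*(A'+3) * n^2) := by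
      have e1 : ((m:ℝ) * X0) * ((A'+4)*(A'+3) * n^2)
          = ((m:ℝ) * n^2) * (((B'+4)*(B'+3)) * X2) := by
        rw [← rid1]; ring
      rw [e1]
      have hA0 : (0:ℝ) ≤ A' := by rw [hA']; positivity
      have h11 : (11:ℝ) ≤ A' := by rw [hA']; exact_mod_cast ha11
      have c1 : ((m:ℝ) * n^2) * (((B'+4)*(B'+3)) * X2)
          ≤ (2 * K * (A'+4)^2) * (((4/9) * n^2) * X2) := by
        apply mul_le_mul hmn (mul_le_mul_of_nonneg_right hBB (le_of_lt hX2pos))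
        · positivity
        · positivity
      refine le_trans c1 ?_
      have h11 : (11:ℝ) ≤ A' := by rw [hA']; exact_mod_cast ha11
      have hfrac : (8/9:ℝ)*(A'+4) ≤ (31/32)*(A'+3) := by linarith only [h11]
      have hq : (0:ℝ) ≤ (K:ℝ)*X2*(A'+4)*n^2 := by positivity
      have hm2 := mul_le_mul_of_nonneg_right hfrac hq
      nlinarith only [hm2]
    exact le_of_mul_le_mul_right key (by positivity)
  -- Step C : X0 * X4 ≤ X2 ^ 2
  have hab' : (A' : ℝ) ≤ B' := by rw [hA', hB']; exact_mod_cast hab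
  have cross : ((B'+4)*(B'+3)*((A'+2)*(A'+1)) : ℝ) ≤ (A'+4)*(A'+3)*((B'+2)*(B'+1)) := by
    have hA0 : (0:ℝ) ≤ A' := by rw [hA']; positivity
    have hB0 : (0:ℝ) ≤ B' := le_trans hA0 hab'
    have c1 : (B'+4)*(A'+2) ≤ (A'+4)*(B'+2) := by nlinarith only [hab', hA0]
    have c2 : (B'+3)*(A'+1) ≤ (A'+3)*(B'+1) := by nlinarith only [hab', hA0]
    nlinarith only [mul_le_mul c1 c2 (by nlinarith only [hA0, hB0])
      (by nlinarith only [hA0, hB0])]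
  have heqC : X0*X4*((A'+4)*(A'+3)*((B'+2)*(B'+1)))
      = X2^2*((B'+4)*(B'+3)*((A'+2)*(A'+1))) := by
    linear_combination (X4*(B'+2)*(B'+1)) * rid1 - ((B'+4)*(B'+3)*X2) * rid2
  have hBpos : (0:ℝ) < (A'+4)*(A'+3)*((B'+2)*(B'+1)) := by
    have : (0:ℝ) ≤ B' := by rw [hB']; positivity
    rw [hA']; positivity
  have stepC : X0 * X4 ≤ X2^2 := by
    have key : (X0*X4) * ((A'+4)*(A'+3)*((B'+2)*(B'+1)))
        ≤ X2^2 * ((A'+4)*(A'+3)*((B'+2)*(B'+1))) := by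
      rw [heqC]
      exact mul_le_mul_of_nonneg_left cross (sq_nonneg X2)
    exact le_of_mul_le_mul_right key hBpos
  -- cast the moment identities and Markov/CS facts
  have rG1 : (K:ℝ) * X2 ≤ (∑ S ∈ Amark, ((pairs.filter (fun p => p.1 ∈ S ∧ p.2 ∈ S)).card : ℝ)) + (m:ℝ) * X0 := by
    have := hsplit
    rw [h1, hchoose_eq] at this
    have rcast : ((K * (b+2).choose (a+2) : ℕ) : ℝ)
        ≤ ((∑ S ∈ Amark, (pairs.filter (fun p => p.1 ∈ S ∧ p.2 ∈ S)).card : ℕ) : ℝ) + (((b+4).choose (a+4) * m : ℕ) : ℝ) := by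
      exact_mod_cast this
    push_cast at rcast
    rw [hX2, hX0]
    push_cast
    linarith only [rcast]
  have rG2 : (∑ S ∈ Amark, ((pairs.filter (fun p => p.1 ∈ S ∧ p.2 ∈ S)).card : ℝ))^2
      ≤ (Amark.card : ℝ) * ((K:ℝ) * X2 + ((K:ℝ)^2 - K) * X4) := by
    have cs : (∑ S ∈ Amark, ((pairs.filter (fun p => p.1 ∈ S ∧ p.2 ∈ S)).card : ℝ))^2 ≤ (Amark.card : ℝ) * ∑ S ∈ Amark, ((pairs.filter (fun p => p.1 ∈ S ∧ p.2 ∈ S)).card : ℝ)^2 :=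
      sq_sum_le_card_mul_sum_sq
    have mono : ∑ S ∈ Amark, ((pairs.filter (fun p => p.1 ∈ S ∧ p.2 ∈ S)).card : ℝ)^2 ≤ ∑ S ∈ Ω, ((pairs.filter (fun p => p.1 ∈ S ∧ p.2 ∈ S)).card : ℝ)^2 := by
      apply Finset.sum_le_sum_of_subset_of_nonneg (Finset.filter_subset _ _)
      intro i _ _; exact sq_nonneg _
    have hKsq : K ≤ K^2 := Nat.le_self_pow two_ne_zero K
    have h2r : ∑ S ∈ Ω, ((pairs.filter (fun p => p.1 ∈ S ∧ p.2 ∈ S)).card : ℝ)^2 = (K:ℝ) * X2 + ((K:ℝ)^2 - K) * X4 := by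
      have : ((∑ S ∈ Ω, ((pairs.filter (fun p => p.1 ∈ S ∧ p.2 ∈ S)).card)^2 : ℕ) : ℝ)
          = ((K * (b+2).choose (a+2) + (K^2 - K) * b.choose a : ℕ) : ℝ) := by
        exact_mod_cast congrArg (Nat.cast : ℕ → ℝ) h2
      push_cast [Nat.cast_sub hKsq] at this
      rw [hX2, hX4]
      push_cast
      linarith only [this]
    calc (∑ S ∈ Amark, ((pairs.filter (fun p => p.1 ∈ S ∧ p.2 ∈ S)).card : ℝ))^2 ≤ (Amark.card : ℝ) * ∑ S ∈ Amark, ((pairs.filter (fun p => p.1 ∈ S ∧ p.2 ∈ S)).card : ℝ)^2 := cs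
      _ ≤ (Amark.card : ℝ) * ∑ S ∈ Ω, ((pairs.filter (fun p => p.1 ∈ S ∧ p.2 ∈ S)).card : ℝ)^2 :=
          mul_le_mul_of_nonneg_left mono (Nat.cast_nonneg _)
      _ = (Amark.card : ℝ) * ((K:ℝ) * X2 + ((K:ℝ)^2 - K) * X4) := by rw [h2r]
  -- final assembly
  have hgoal : (1/2048 : ℝ) * (N.choose s₁ : ℝ) ≤ (Amark.card : ℝ) := by
    rw [hchoose_eq]
    set SA : ℝ := ∑ S ∈ Amark, ((pairs.filter (fun p => p.1 ∈ S ∧ p.2 ∈ S)).card : ℝ) with hSA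
    have hPpos : 0 < (K:ℝ) * X2 := mul_pos hk0 hX2pos
    have hSAlb : (K:ℝ) * X2 / 32 ≤ SA := by
      linarith only [rG1, stepA]
    have hSAnn : 0 ≤ SA := le_trans (by positivity) hSAlb
    have hSA2 : ((K:ℝ) * X2)^2 / 1024 ≤ SA^2 := by
      nlinarith only [hSAlb, hSAnn, hPpos]
    have hQx : ((K:ℝ) * X2 + ((K:ℝ)^2 - K) * X4) * X0 ≤ 2 * ((K:ℝ) * X2)^2 := by
      have hKK : (0:ℝ) ≤ (K:ℝ)^2 - K := by
        have hk1r : (1:ℝ) ≤ (K:ℝ) := by exact_mod_cast hK1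
        nlinarith only [hk1r]
      have t1 : ((K:ℝ)^2 - K) * (X4 * X0) ≤ ((K:ℝ)^2 - K) * X2^2 :=
        mul_le_mul_of_nonneg_left (by linarith only [stepC] : X4 * X0 ≤ X2^2) hKK
      have t2 : (K:ℝ) * X2 * X0 ≤ (K:ℝ) * X2 * ((K:ℝ) * X2) :=
        mul_le_mul_of_nonneg_left stepB (by positivity)
      have t3 : ((K:ℝ)^2 - K) * X2^2 ≤ (K:ℝ)^2 * X2^2 := by
        nlinarith only [sq_nonneg X2, hk0]
      nlinarith only [t1, t2, t3]
    have hAnn : (0:ℝ) ≤ (Amark.card : ℝ) := Nat.cast_nonneg _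
    -- Amark.card * 2P^2 ≥ Amark.card * (SQ * X0) ≥ SA^2 * X0 ≥ (P^2/1024) * X0
    have k1 : SA^2 * X0 ≤ ((Amark.card : ℝ) * ((K:ℝ) * X2 + ((K:ℝ)^2 - K) * X4)) * X0 :=
      mul_le_mul_of_nonneg_right rG2 (le_of_lt hX0pos)
    have k2 : ((Amark.card : ℝ) * ((K:ℝ) * X2 + ((K:ℝ)^2 - K) * X4)) * X0
        ≤ (Amark.card : ℝ) * (2 * ((K:ℝ) * X2)^2) := by
      rw [mul_assoc]
      exact mul_le_mul_of_nonneg_left hQx hAnn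
    have k3 : (((K:ℝ) * X2)^2/1024) * X0 ≤ SA^2 * X0 :=
      mul_le_mul_of_nonneg_right hSA2 (le_of_lt hX0pos)
    nlinarith only [k1, k2, k3, hPpos, mul_pos hPpos hPpos, hX0pos, hAnn]
  have hd : (0:ℝ) < (N.choose s₁ : ℝ) := by rw [hchoose_eq]; exact hX0pos
  rw [le_div_iff₀ hd]
  linarith only [hgoal]
end

section
/- The function g(s₁, s₂) = s₁ + s₂·sqrt(n/s₁) + n/sqrt(s₁) + n/sqrt(s₂), over real s₁, s₂ with 1 ≤ s₂ ≤ s₁ ≤ n, is Θ(n^{5/7}) at s₁ = n^{5/7}, s₂ = n^{4/7}, and moreover n^{5/7} is the optimal order: for all admissible (s₁,s₂), g(s₁,s₂) ≥ c·n^{5/7} for some absolute constant c > 0. -/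
open Real in
/-- Optimization of the cost expression `g(s₁,s₂) = s₁ + s₂·√(n/s₁) + n/√s₁ + n/√s₂`
over `1 ≤ s₂ ≤ s₁ ≤ n`: (a) at `s₁ = n^{5/7}`, `s₂ = n^{4/7}` one has
`g ≤ 4·n^{5/7}` (so `g = Θ(n^{5/7})` there), and (b) this is the optimal order:
there is an absolute constant `c > 0` with `g(s₁,s₂) ≥ c·n^{5/7}` for all
admissible `(s₁,s₂)`. -/
theorem cost_optimization :
    ∃ c : ℝ, 0 < c ∧
      ∀ n : ℝ, 1 ≤ n →
        (n ^ ((5 : ℝ)/7) + n ^ ((4 : ℝ)/7) * Real.sqrt (n / n ^ ((5 : ℝ)/7))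
            + n / Real.sqrt (n ^ ((5 : ℝ)/7)) + n / Real.sqrt (n ^ ((4 : ℝ)/7))
          ≤ 4 * n ^ ((5 : ℝ)/7)) ∧
        (∀ s₁ s₂ : ℝ, 1 ≤ s₂ → s₂ ≤ s₁ → s₁ ≤ n →
          c * n ^ ((5 : ℝ)/7)
            ≤ s₁ + s₂ * Real.sqrt (n / s₁) + n / Real.sqrt s₁ + n / Real.sqrt s₂) := by
  refine ⟨1, one_pos, fun n hn => ?_⟩
  have hn0 : (0 : ℝ) < n := lt_of_lt_of_le one_pos hn
  have hdiv : n / n ^ ((5 : ℝ)/7) = n ^ ((2 : ℝ)/7) := by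
    rw [show n / n ^ ((5:ℝ)/7) = n ^ (1:ℝ) / n ^ ((5:ℝ)/7) by rw [Real.rpow_one],
      ← Real.rpow_sub hn0]
    norm_num
  have hs1 : Real.sqrt (n / n ^ ((5 : ℝ)/7)) = n ^ ((1 : ℝ)/7) := by
    rw [hdiv, Real.sqrt_eq_rpow, ← Real.rpow_mul hn0.le]; norm_num
  have hs2 : Real.sqrt (n ^ ((5 : ℝ)/7)) = n ^ ((5 : ℝ)/14) := by
    rw [Real.sqrt_eq_rpow, ← Real.rpow_mul hn0.le]; norm_num
  have hs3 : Real.sqrt (n ^ ((4 : ℝ)/7)) = n ^ ((2 : ℝ)/7) := by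
    rw [Real.sqrt_eq_rpow, ← Real.rpow_mul hn0.le]; norm_num
  have hd2 : n / n ^ ((5 : ℝ)/14) = n ^ ((9 : ℝ)/14) := by
    rw [show n / n ^ ((5:ℝ)/14) = n ^ (1:ℝ) / n ^ ((5:ℝ)/14) by rw [Real.rpow_one],
      ← Real.rpow_sub hn0]
    norm_num
  have hd3 : n / n ^ ((2 : ℝ)/7) = n ^ ((5 : ℝ)/7) := by
    rw [show n / n ^ ((2:ℝ)/7) = n ^ (1:ℝ) / n ^ ((2:ℝ)/7) by rw [Real.rpow_one],
      ← Real.rpow_sub hn0]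
    norm_num
  have hmul : n ^ ((4 : ℝ)/7) * n ^ ((1 : ℝ)/7) = n ^ ((5 : ℝ)/7) := by
    rw [← Real.rpow_add hn0]; norm_num
  constructor
  · rw [hs1, hs2, hs3, hd2, hd3, hmul]
    have : n ^ ((9 : ℝ)/14) ≤ n ^ ((5 : ℝ)/7) :=
      Real.rpow_le_rpow_of_exponent_le hn (by norm_num)
    linarith
  · intro s₁ s₂ h1 h12 h1n
    have hs₂0 : (0 : ℝ) < s₂ := lt_of_lt_of_le one_pos h1
    have hs₁0 : (0 : ℝ) < s₁ := lt_of_lt_of_le hs₂0 h12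
    have hA : 0 ≤ s₂ * Real.sqrt (n / s₁) :=
      mul_nonneg hs₂0.le (Real.sqrt_nonneg _)
    have hB : 0 ≤ n / Real.sqrt s₁ :=
      div_nonneg hn0.le (Real.sqrt_nonneg _)
    have hC : 0 ≤ n / Real.sqrt s₂ :=
      div_nonneg hn0.le (Real.sqrt_nonneg _)
    rw [one_mul]
    by_cases hcase1 : n ^ ((5 : ℝ)/7) ≤ s₁
    · linarith
    push_neg at hcase1
    by_cases hcase2 : s₂ ≤ n ^ ((4 : ℝ)/7)
    · -- n / √s₂ ≥ n / n^{2/7} = n^{5/7}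
      have hsq : Real.sqrt s₂ ≤ n ^ ((2 : ℝ)/7) := by
        rw [← hs3]
        exact Real.sqrt_le_sqrt hcase2
      have hsq0 : 0 < Real.sqrt s₂ := Real.sqrt_pos.mpr hs₂0
      have : n / n ^ ((2 : ℝ)/7) ≤ n / Real.sqrt s₂ :=
        div_le_div_of_nonneg_left hn0.le hsq0 hsq
      rw [hd3] at this
      linarith
    push_neg at hcase2
    · -- s₂ * √(n/s₁) ≥ n^{4/7} * n^{1/7} = n^{5/7}
      have hds : n / n ^ ((5 : ℝ)/7) ≤ n / s₁ :=
        div_le_div_of_nonneg_left hn0.le hs₁0 hcase1.le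
      have hsq : n ^ ((1 : ℝ)/7) ≤ Real.sqrt (n / s₁) := by
        rw [← hs1]
        exact Real.sqrt_le_sqrt hds
      have hpos : (0 : ℝ) ≤ n ^ ((1 : ℝ)/7) := (Real.rpow_pos_of_pos hn0 _).le
      have : n ^ ((4 : ℝ)/7) * n ^ ((1 : ℝ)/7) ≤ s₂ * Real.sqrt (n / s₁) :=
        mul_le_mul hcase2.le hsq hpos hs₂0.le
      rw [hmul] at this
      linarith
end

section
/- In the Local Diffusion with Garbage procedure, after choosing an m-subset J of P(S₁) and setting S̃₁ = S₁ \ I(J), the resulting map (S₁, J) ↦ (S̃₁, J) is a bijection between {(S₁, J) : S₁ ∈ M^{S₂}, J ∈ C(P(S₁), m)} and {(S̃₁, J) : J ∈ C(P \ S₂, m), S̃₁ ⊆ (A₁∪A₂)\I(S₂∪J), |S̃₁| = s₁ − 2m}. -/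
/-- The map `(S₁, J) ↦ (S₁ \ I(J), J)` of the Local Diffusion with Garbage procedure is a
bijection between `{(S₁, J) : S₁ ∈ M^{S₂}, J an m-subset of P(S₁)}` and
`{(T₁, J) : J an m-subset of P \ S₂, T₁ ⊆ (A₁∪A₂) \ I(S₂ ∪ J), |T₁| = s₁ - 2m}`. -/
theorem local_diffusion_bijection {V : Type*} [DecidableEq V]
    (A₁ A₂ : Finset V) (hA : Disjoint A₁ A₂)
    (P : Finset (V × V)) (s₁ s₂ m : ℕ)
    (hPmem : ∀ p ∈ P, p.1 ∈ A₁ ∧ p.2 ∈ A₂)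
    (hPdisj : ∀ p ∈ P, ∀ q ∈ P, p ≠ q →
      Disjoint ({p.1, p.2} : Finset V) ({q.1, q.2} : Finset V))
    (hm : 2 * m ≤ s₁)
    (S₂ : Finset (V × V)) (hS₂ : S₂ ⊆ P) (hS₂card : S₂.card = s₂) :
    Set.BijOn
      (fun p : Finset V × Finset (V × V) =>
        (p.1 \ p.2.biUnion (fun q => ({q.1, q.2} : Finset V)), p.2))
      {p : Finset V × Finset (V × V) |
        p.1 ⊆ (A₁ ∪ A₂) \ S₂.biUnion (fun q => ({q.1, q.2} : Finset V)) ∧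
        p.1.card = s₁ ∧
        m ≤ (P.filter (fun q => q.1 ∈ p.1 ∧ q.2 ∈ p.1)).card ∧
        p.2 ⊆ P.filter (fun q => q.1 ∈ p.1 ∧ q.2 ∈ p.1) ∧ p.2.card = m}
      {p : Finset V × Finset (V × V) |
        p.2 ⊆ P \ S₂ ∧ p.2.card = m ∧
        p.1 ⊆ (A₁ ∪ A₂) \ (S₂ ∪ p.2).biUnion (fun q => ({q.1, q.2} : Finset V)) ∧
        p.1.card = s₁ - 2 * m} := by
  set I : Finset (V × V) → Finset V := fun S => S.biUnion (fun q => ({q.1, q.2} : Finset V))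
    with hIdef
  have hne : ∀ q ∈ P, q.1 ≠ q.2 := by
    intro q hq h
    exact (Finset.disjoint_left.mp hA) (hPmem q hq).1 (h ▸ (hPmem q hq).2)
  have hcardpair : ∀ q ∈ P, ({q.1, q.2} : Finset V).card = 2 := by
    intro q hq
    rw [Finset.card_insert_of_notMem (by simp [hne q hq]), Finset.card_singleton]
  have hcardI : ∀ J, J ⊆ P → (I J).card = 2 * J.card := by
    intro J hJ
    rw [hIdef]
    rw [Finset.card_biUnion (fun p hp q hq hpq => hPdisj p (hJ hp) q (hJ hq) hpq)]
    rw [Finset.sum_congr rfl (fun q hq => hcardpair q (hJ hq))]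
    simp [mul_comm]
  -- disjointness of the pair-sets of distinct pairs, phrased elementwise
  have hdisj' : ∀ p ∈ P, ∀ q ∈ P, p ≠ q → ∀ x, x ∈ ({p.1, p.2} : Finset V) →
      x ∉ ({q.1, q.2} : Finset V) := by
    intro p hp q hq hpq x hx hx'
    exact (Finset.disjoint_left.mp (hPdisj p hp q hq hpq)) hx hx'
  constructor
  · -- MapsTo
    rintro ⟨S₁, J⟩ ⟨hsub, hcard, _hfilt, hJsub, hJcard⟩
    have hJP : J ⊆ P := hJsub.trans (Finset.filter_subset _ _)
    have hIJsub : I J ⊆ S₁ := by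
      intro x hx
      simp only [hIdef, Finset.mem_biUnion, Finset.mem_insert, Finset.mem_singleton] at hx
      obtain ⟨q, hq, rfl | rfl⟩ := hx
      · exact ((Finset.mem_filter.mp (hJsub hq)).2).1
      · exact ((Finset.mem_filter.mp (hJsub hq)).2).2
    refine ⟨?_, hJcard, ?_, ?_⟩
    · -- J ⊆ P \ S₂
      intro q hq
      rw [Finset.mem_sdiff]
      refine ⟨hJP hq, fun hq2 => ?_⟩
      have h1 : q.1 ∈ I J := by
        simp only [hIdef, Finset.mem_biUnion]; exact ⟨q, hq, by simp⟩
      have h1' : q.1 ∈ I S₂ := by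
        simp only [hIdef, Finset.mem_biUnion]; exact ⟨q, hq2, by simp⟩
      have := hsub (hIJsub h1)
      rw [Finset.mem_sdiff] at this
      exact this.2 h1'
    · -- subset condition for the image
      intro x hx
      rw [Finset.mem_sdiff] at hx
      have := hsub hx.1
      rw [Finset.mem_sdiff] at this
      rw [Finset.mem_sdiff]
      refine ⟨this.1, fun h => ?_⟩
      simp only [Finset.mem_biUnion, Finset.mem_union] at h
      obtain ⟨q, hq | hq, hxq⟩ := h
      · exact this.2 (Finset.mem_biUnion.mpr ⟨q, hq, hxq⟩)
      · exact hx.2 (Finset.mem_biUnion.mpr ⟨q, hq, hxq⟩)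
    · -- cardinality
      show (S₁ \ I J).card = s₁ - 2 * m
      rw [Finset.card_sdiff_of_subset hIJsub, hcard, hcardI J hJP, hJcard]
  constructor
  · -- InjOn
    rintro ⟨S₁, J⟩ ⟨hsub, hcard, _hfilt, hJsub, hJcard⟩
      ⟨S₁', J'⟩ ⟨hsub', hcard', _hfilt', hJsub', hJcard'⟩ heq
    simp only [Prod.mk.injEq] at heq
    obtain ⟨h1, h2⟩ := heq
    subst h2
    have hIJsub : I J ⊆ S₁ := by
      intro x hx
      simp only [hIdef, Finset.mem_biUnion, Finset.mem_insert, Finset.mem_singleton] at hx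
      obtain ⟨q, hq, rfl | rfl⟩ := hx
      · exact ((Finset.mem_filter.mp (hJsub hq)).2).1
      · exact ((Finset.mem_filter.mp (hJsub hq)).2).2
    have hIJsub' : I J ⊆ S₁' := by
      intro x hx
      simp only [hIdef, Finset.mem_biUnion, Finset.mem_insert, Finset.mem_singleton] at hx
      obtain ⟨q, hq, rfl | rfl⟩ := hx
      · exact ((Finset.mem_filter.mp (hJsub' hq)).2).1
      · exact ((Finset.mem_filter.mp (hJsub' hq)).2).2
    have : S₁ = S₁' := by
      rw [← Finset.sdiff_union_of_subset hIJsub, ← Finset.sdiff_union_of_subset hIJsub', h1]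
    rw [this]
  · -- SurjOn
    rintro ⟨T₁, J⟩ ⟨hJPS, hJcard, hsub, hcard⟩
    have hJP : J ⊆ P := fun q hq => (Finset.mem_sdiff.mp (hJPS hq)).1
    have hJS₂ : ∀ q ∈ J, q ∉ S₂ := fun q hq => (Finset.mem_sdiff.mp (hJPS hq)).2
    -- T₁ is disjoint from I J
    have hTdisj : Disjoint T₁ (I J) := by
      rw [Finset.disjoint_left]
      intro x hx hxI
      have := hsub hx
      rw [Finset.mem_sdiff] at this
      apply this.2
      simp only [hIdef, Finset.mem_biUnion] at hxI
      obtain ⟨q, hq, hxq⟩ := hxI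
      exact Finset.mem_biUnion.mpr ⟨q, Finset.mem_union_right _ hq, hxq⟩
    refine ⟨⟨T₁ ∪ I J, J⟩, ⟨?_, ?_, ?_, ?_, hJcard⟩, ?_⟩
    · -- subset: T₁ ∪ I J ⊆ (A₁ ∪ A₂) \ I S₂
      intro x hx
      rw [Finset.mem_union] at hx
      rcases hx with hx | hx
      · have := hsub hx
        rw [Finset.mem_sdiff] at this ⊢
        refine ⟨this.1, fun h => this.2 ?_⟩
        simp only [Finset.mem_biUnion] at h
        obtain ⟨q, hq, hxq⟩ := h
        exact Finset.mem_biUnion.mpr ⟨q, Finset.mem_union_left _ hq, hxq⟩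
      · simp only [hIdef, Finset.mem_biUnion] at hx
        obtain ⟨q, hq, hxq⟩ := hx
        rw [Finset.mem_sdiff]
        constructor
        · rcases Finset.mem_insert.mp hxq with rfl | h
          · exact Finset.mem_union_left _ (hPmem q (hJP hq)).1
          · rw [Finset.mem_singleton] at h
            exact h ▸ Finset.mem_union_right _ (hPmem q (hJP hq)).2
        · intro hxS₂
          simp only [Finset.mem_biUnion] at hxS₂
          obtain ⟨q', hq', hxq'⟩ := hxS₂
          have hne' : q ≠ q' := fun h => hJS₂ q hq (h ▸ hq')
          exact hdisj' q (hJP hq) q' (hS₂ hq') hne' x hxq hxq'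
    · -- card = s₁
      show (T₁ ∪ I J).card = s₁
      rw [Finset.card_union_of_disjoint hTdisj, hcard, hcardI J hJP, hJcard,
        Nat.sub_add_cancel hm]
    · -- m ≤ filter card
      have hJfilt : J ⊆ P.filter (fun q => q.1 ∈ T₁ ∪ I J ∧ q.2 ∈ T₁ ∪ I J) := by
        intro q hq
        rw [Finset.mem_filter]
        refine ⟨hJP hq, ?_, ?_⟩
        · exact Finset.mem_union_right _ (by
            simp only [hIdef, Finset.mem_biUnion]; exact ⟨q, hq, by simp⟩)
        · exact Finset.mem_union_right _ (by
            simp only [hIdef, Finset.mem_biUnion]; exact ⟨q, hq, by simp⟩)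
      calc m = J.card := hJcard.symm
        _ ≤ _ := Finset.card_le_card hJfilt
    · -- J ⊆ filter
      intro q hq
      rw [Finset.mem_filter]
      refine ⟨hJP hq, ?_, ?_⟩
      · exact Finset.mem_union_right _ (by
          simp only [hIdef, Finset.mem_biUnion]; exact ⟨q, hq, by simp⟩)
      · exact Finset.mem_union_right _ (by
          simp only [hIdef, Finset.mem_biUnion]; exact ⟨q, hq, by simp⟩)
    · -- image equality
      show ((T₁ ∪ I J) \ I J, J) = (T₁, J)
      rw [Finset.union_sdiff_right, Finset.sdiff_eq_self_of_disjoint hTdisj]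
end

section
/- Let |π⟩ = Σ_x sqrt(π(x)) Σ_y sqrt(P(x,y)) |x,y,D(x,y)⟩ and let the Database Swap S map |x,y,D(x,y)⟩ to |y,x,D(y,x)⟩ for edges (x,y). If P is reversible with respect to π (π(x)P(x,y) = π(y)P(y,x)), then S|π⟩ = |π⟩. -/
/-- The Database Swap fixes the stationary state: let
`|π⟩ = Σ_x √(π(x)) Σ_y √(P(x,y)) |x,y,D(x,y)⟩` and let the Database Swap `S` map
`|x,y,D(x,y)⟩` to `|y,x,D(y,x)⟩` for directed edges `(x,y)`. If `P` is reversible with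
respect to `π` (i.e. `π(x)P(x,y) = π(y)P(y,x)`), then `S|π⟩ = |π⟩`. -/
theorem database_swap_fixes_pi
    {H : Type*} [NormedAddCommGroup H] [InnerProductSpace ℂ H]
    {X : Type*} [Fintype X] [DecidableEq X]
    (E : Finset (X × X)) (hEsymm : ∀ x y, (x, y) ∈ E → (y, x) ∈ E)
    (P : X → X → ℝ) (π : X → ℝ)
    (hP : ∀ x y, 0 ≤ P x y) (hπ : ∀ x, 0 ≤ π x)
    (hPE : ∀ x y, (x, y) ∉ E → P x y = 0)
    (hrev : ∀ x y, π x * P x y = π y * P y x)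
    (v : X → X → H)
    (hon : Orthonormal ℂ (fun e : {e : X × X // e ∈ E} => v e.1.1 e.1.2))
    (S : H →ₗ[ℂ] H)
    (hS : ∀ x y, (x, y) ∈ E → S (v x y) = v y x) :
    S (∑ x, ∑ y, ((Real.sqrt (π x) * Real.sqrt (P x y) : ℝ) : ℂ) • v x y)
      = ∑ x, ∑ y, ((Real.sqrt (π x) * Real.sqrt (P x y) : ℝ) : ℂ) • v x y := by
  set c : X → X → ℂ := fun x y => ((Real.sqrt (π x) * Real.sqrt (P x y) : ℝ) : ℂ) with hc
  have hc0 : ∀ x y, (x, y) ∉ E → c x y = 0 := by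
    intro x y h
    simp [hc, hPE x y h]
  have hcsymm : ∀ x y, c x y = c y x := by
    intro x y
    have : Real.sqrt (π x) * Real.sqrt (P x y) = Real.sqrt (π y) * Real.sqrt (P y x) := by
      rw [← Real.sqrt_mul (hπ x), ← Real.sqrt_mul (hπ y), hrev]
    simp only [hc]
    exact_mod_cast congrArg Complex.ofReal this
  have hsum : (∑ x, ∑ y, c x y • v x y) = ∑ p ∈ E, c p.1 p.2 • v p.1 p.2 := by
    rw [← Finset.sum_product']
    refine (Finset.sum_subset (Finset.subset_univ _ |>.trans (by simp)) ?_).symm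
    · intro p _ hp
      rw [hc0 p.1 p.2 hp, zero_smul]
  rw [hsum, map_sum]
  have : ∀ p ∈ E, S (c p.1 p.2 • v p.1 p.2) = c p.1 p.2 • v p.2 p.1 := by
    intro p hp
    rw [map_smul, hS p.1 p.2 hp]
  rw [Finset.sum_congr rfl this]
  refine Finset.sum_nbij' (fun p => Prod.swap p) (fun p => Prod.swap p) ?_ ?_ ?_ ?_ ?_
  · intro p hp; exact hEsymm p.1 p.2 hp
  · intro p hp; exact hEsymm p.1 p.2 hp
  · intro p _; simp
  · intro p _; simp
  · intro p hp; simp [hcsymm p.2 p.1]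
end
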